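/- Let g ∈ L¹(0,1) be positive and let K = {f ∈ L¹(0,1) : |f| ≺≺ g} be the orbit of g. Then there exists an N-function G with G(t)/t → ∞ as t → ∞ such that sup{∫_0^1 G(|f(s)|) ds : f ∈ K} ≤ ∫_0^1 G(g(s)) ds < ∞. -/

import Mathlib

open MeasureTheory Set Filter Topology

/-- An N-function: continuous convex `G : [0,∞) → [0,∞)` with `G 0 = 0`, `G t > 0` for `t > 0`,
`G t / t → 0` as `t → 0+` and `G t / t → ∞` as `t → ∞`. -/
def IsNFunction (G : ℝ → ℝ) : Prop :=
  ContinuousOn G (Ici 0) ∧ ConvexOn ℝ (Ici 0) G ∧ (∀ t, 0 ≤ t → 0 ≤ G t) ∧ G 0 = 0 ∧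
  (∀ t, 0 < t → 0 < G t) ∧
  Tendsto (fun t => G t / t) (𝓝[>] 0) (𝓝 0) ∧
  Tendsto (fun t => G t / t) atTop atTop

/-- An Orlicz function: convex `G : [0,∞) → [0,∞)` with `G 0 = 0`, continuous at `0`,
and not identically zero. -/
def IsOrliczFunction (G : ℝ → ℝ) : Prop :=
  ConvexOn ℝ (Ici 0) G ∧ (∀ t, 0 ≤ t → 0 ≤ G t) ∧ G 0 = 0 ∧
  ContinuousWithinAt G (Ici 0) 0 ∧ ∃ t, 0 ≤ t ∧ G t ≠ 0

/-- Decreasing rearrangement of `|f|` with respect to Lebesgue measure on `(0,1)`. -/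
noncomputable def mu01 (f : ℝ → ℝ) (t : ℝ) : ℝ :=
  sInf {s : ℝ | 0 ≤ s ∧ volume {x | x ∈ Ioo (0:ℝ) 1 ∧ s < |f x|} ≤ ENNReal.ofReal t}

/-- Decreasing rearrangement of `|f|` with respect to Lebesgue measure on `(0,∞)`. -/
noncomputable def muInf (f : ℝ → ℝ) (t : ℝ) : ℝ :=
  sInf {s : ℝ | 0 ≤ s ∧ volume {x | x ∈ Ioi (0:ℝ) ∧ s < |f x|} ≤ ENNReal.ofReal t}

/-- Hardy–Littlewood–Pólya submajorization `|f| ≺≺ g` on `(0,1)`. -/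
def Submaj01 (f g : ℝ → ℝ) : Prop :=
  ∀ t ∈ Ioc (0:ℝ) 1,
    ∫⁻ s in Ioo (0:ℝ) t, ENNReal.ofReal (mu01 f s) ≤
      ∫⁻ s in Ioo (0:ℝ) t, ENNReal.ofReal (mu01 g s)

/-- Hardy–Littlewood–Pólya submajorization `|f| ≺≺ g` on `(0,∞)`. -/
def SubmajInf (f g : ℝ → ℝ) : Prop :=
  ∀ t : ℝ, 0 < t →
    ∫⁻ s in Ioo (0:ℝ) t, ENNReal.ofReal (muInf f s) ≤
      ∫⁻ s in Ioo (0:ℝ) t, ENNReal.ofReal (muInf g s)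

/-!
For `a ≥ 0` the hinge `φₐ(t) = (t - a)⁺` satisfies `∫ φₐ(|f|) ≤ ∫ φₐ(g)` whenever `|f| ≺≺ g`:
by the layer-cake formula both sides only see the decreasing rearrangements, and `μ(·, f) > a`
exactly on the initial interval `(0, t₀)`, `t₀ = |{|f| > a}|`, where submajorization at `t₀`
applies. Summing, the same holds for every `G = ∑ cₙ (t - bₙ)⁺` with `cₙ ≥ 0`. We take
`G(t) = ∑ 2⁻ⁿ (t - 2⁻ⁿ)⁺ + ∑ (t - bₙ)⁺`: the first sum makes `G` positive with `G(t)/t → 0` at `0`,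
the second makes `G(t)/t → ∞`, and since `g ∈ L¹` the thresholds `bₙ → ∞` can be chosen with
`∑ₙ ∫ (g - bₙ)⁺ < ∞`, which keeps `∫ G(g)` finite.
-/

open scoped ENNReal

section Rearrangement

variable {f g h : ℝ → ℝ} {a t u : ℝ}

noncomputable def distFun01 (h : ℝ → ℝ) (u : ℝ) : ℝ≥0∞ :=
  volume {x | x ∈ Ioo (0:ℝ) 1 ∧ u < |h x|}

lemma distFun01_eq_restrict (h : ℝ → ℝ) (u : ℝ) :
    distFun01 h u = volume.restrict (Ioo (0:ℝ) 1) {x | u < |h x|} := by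
  rw [Measure.restrict_apply' measurableSet_Ioo, distFun01, inter_comm, ofPred_and]
  rfl

lemma distFun01_antitone (h : ℝ → ℝ) : Antitone (distFun01 h) :=
  fun _ _ huv => measure_mono fun _ hx => ⟨hx.1, huv.trans_lt hx.2⟩

lemma distFun01_le_one (h : ℝ → ℝ) (u : ℝ) : distFun01 h u ≤ 1 :=
  (measure_mono fun _ hx => hx.1).trans_eq (by simp)

lemma distFun01_ne_top (h : ℝ → ℝ) (u : ℝ) : distFun01 h u ≠ ∞ :=
  ne_top_of_le_ne_top ENNReal.one_ne_top (distFun01_le_one h u)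

lemma toReal_distFun01_le_one (h : ℝ → ℝ) (u : ℝ) : (distFun01 h u).toReal ≤ 1 :=
  ENNReal.toReal_le_of_le_ofReal zero_le_one (by simpa using distFun01_le_one h u)

lemma tendsto_distFun01_atTop (hm : AEMeasurable h (volume.restrict (Ioo 0 1))) :
    Tendsto (distFun01 h) atTop (𝓝 0) := by
  have hempty : ⋂ u : ℝ, {x | u < |h x|} = ∅ :=
    eq_empty_of_forall_notMem fun x hx => lt_irrefl |h x| (mem_iInter.1 hx |h x|)
  have := tendsto_measure_iInter_atTop (μ := volume.restrict (Ioo (0:ℝ) 1))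
    (s := fun u : ℝ => {x | u < |h x|})
    (fun _ => nullMeasurableSet_lt aemeasurable_const hm.abs)
    (fun _ _ huv _ hx => huv.trans_lt hx) ⟨0, measure_ne_top _ _⟩
  rw [hempty, measure_empty] at this
  exact this.congr fun u => (distFun01_eq_restrict h u).symm

lemma tendsto_distFun01_add_inv (h : ℝ → ℝ) (u : ℝ) :
    Tendsto (fun n : ℕ => distFun01 h (u + 1 / (n + 1))) atTop (𝓝 (distFun01 h u)) := by
  have hmono : Monotone fun n : ℕ => {x | x ∈ Ioo (0:ℝ) 1 ∧ u + 1 / (n + 1) < |h x|} :=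
    fun m n hmn _ hx => ⟨hx.1, lt_of_le_of_lt (by gcongr) hx.2⟩
  have hunion : ⋃ n : ℕ, {x | x ∈ Ioo (0:ℝ) 1 ∧ u + 1 / (n + 1) < |h x|} =
      {x | x ∈ Ioo (0:ℝ) 1 ∧ u < |h x|} := by
    ext x
    simp only [mem_iUnion, mem_ofPred_eq]
    constructor
    · rintro ⟨n, hx, hn⟩
      exact ⟨hx, lt_of_le_of_lt (by simp only [le_add_iff_nonneg_right]; positivity) hn⟩
    · rintro ⟨hx, hu⟩
      obtain ⟨n, hn⟩ := exists_nat_one_div_lt (sub_pos.2 hu)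
      exact ⟨n, hx, by linarith⟩
  have := tendsto_measure_iUnion_atTop (μ := volume) hmono
  rwa [hunion] at this

lemma mu01_nonneg (h : ℝ → ℝ) (t : ℝ) : 0 ≤ mu01 h t :=
  Real.sInf_nonneg fun _ hs => hs.1

lemma mu01_le_of_distFun01_le (hu : 0 ≤ u) (hd : distFun01 h u ≤ ENNReal.ofReal t) :
    mu01 h t ≤ u :=
  csInf_le ⟨0, fun _ hs => hs.1⟩ ⟨hu, hd⟩

lemma distFun01_mu01_le (hm : AEMeasurable h (volume.restrict (Ioo 0 1))) (ht : 0 < t) :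
    distFun01 h (mu01 h t) ≤ ENNReal.ofReal t := by
  have hne : {s | 0 ≤ s ∧ distFun01 h s ≤ ENNReal.ofReal t}.Nonempty := by
    obtain ⟨s, hs, hs0⟩ := (((tendsto_distFun01_atTop hm).eventually
      (gt_mem_nhds (ENNReal.ofReal_pos.2 ht))).and (eventually_ge_atTop 0)).exists
    exact ⟨s, hs0, hs.le⟩
  refine le_of_tendsto' (tendsto_distFun01_add_inv h _) fun n => ?_
  obtain ⟨s, hs, hlt⟩ := Real.lt_sInf_add_pos hne (ε := 1 / (n + 1)) (by positivity)
  exact (distFun01_antitone h hlt.le).trans hs.2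

lemma mu01_le_iff (hm : AEMeasurable h (volume.restrict (Ioo 0 1))) (ht : 0 < t) (hu : 0 ≤ u) :
    mu01 h t ≤ u ↔ distFun01 h u ≤ ENNReal.ofReal t :=
  ⟨fun hle => (distFun01_antitone h hle).trans (distFun01_mu01_le hm ht),
    mu01_le_of_distFun01_le hu⟩

lemma mu01_antitoneOn (hm : AEMeasurable h (volume.restrict (Ioo 0 1))) :
    AntitoneOn (mu01 h) (Ioi 0) := fun s hs _ _ hst =>
  (mu01_le_iff hm (lt_of_lt_of_le hs hst) (mu01_nonneg h s)).2
    ((distFun01_mu01_le hm hs).trans (ENNReal.ofReal_le_ofReal hst))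

lemma lt_mu01_iff (hm : AEMeasurable h (volume.restrict (Ioo 0 1))) (ht : 0 < t) (hu : 0 ≤ u) :
    u < mu01 h t ↔ t < (distFun01 h u).toReal := by
  rw [← not_le, mu01_le_iff hm ht hu, not_le,
    ENNReal.ofReal_lt_iff_lt_toReal ht.le (distFun01_ne_top h u)]

lemma distFun01_mu01 (hm : AEMeasurable h (volume.restrict (Ioo 0 1))) (hu : 0 ≤ u) :
    distFun01 (mu01 h) u = distFun01 h u := by
  have hset : {s | s ∈ Ioo (0:ℝ) 1 ∧ u < |mu01 h s|} = Ioo 0 (distFun01 h u).toReal := by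
    ext s
    simp only [mem_ofPred_eq, mem_Ioo, abs_of_nonneg (mu01_nonneg h s)]
    constructor
    · rintro ⟨⟨hs0, -⟩, hlt⟩
      exact ⟨hs0, (lt_mu01_iff hm hs0 hu).1 hlt⟩
    · rintro ⟨hs0, hst⟩
      exact ⟨⟨hs0, hst.trans_le (toReal_distFun01_le_one h u)⟩, (lt_mu01_iff hm hs0 hu).2 hst⟩
  rw [distFun01, hset, Real.volume_Ioo, sub_zero, ENNReal.ofReal_toReal (distFun01_ne_top h u)]

lemma aemeasurable_mu01 (hm : AEMeasurable h (volume.restrict (Ioo 0 1))) :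
    AEMeasurable (mu01 h) (volume.restrict (Ioo 0 1)) :=
  aemeasurable_restrict_of_antitoneOn measurableSet_Ioo
    ((mu01_antitoneOn hm).mono Ioo_subset_Ioi_self)

lemma setLIntegral_max_abs_sub_eq (hm : AEMeasurable h (volume.restrict (Ioo 0 1))) (a : ℝ) :
    ∫⁻ x in Ioo (0:ℝ) 1, ENNReal.ofReal (max (|h x| - a) 0) =
      ∫⁻ u in Ioi 0, distFun01 h (a + u) := by
  rw [lintegral_eq_lintegral_meas_lt (f := fun x => max (|h x| - a) 0) _
    (Eventually.of_forall fun _ => le_max_right _ _) ((hm.abs.sub_const a).max aemeasurable_const)]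
  refine setLIntegral_congr_fun measurableSet_Ioi fun u (hu : 0 < u) => ?_
  rw [distFun01_eq_restrict]
  congr 1
  ext x
  simp only [mem_ofPred_eq, lt_max_iff, hu.not_gt, or_false, lt_sub_iff_add_lt']

lemma setLIntegral_max_abs_sub_eq_mu01 (hm : AEMeasurable h (volume.restrict (Ioo 0 1)))
    (ha : 0 ≤ a) :
    ∫⁻ x in Ioo (0:ℝ) 1, ENNReal.ofReal (max (|h x| - a) 0) =
      ∫⁻ s in Ioo (0:ℝ) 1, ENNReal.ofReal (max (mu01 h s - a) 0) := by
  have hmu := setLIntegral_max_abs_sub_eq (aemeasurable_mu01 hm) a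
  simp only [abs_of_nonneg (mu01_nonneg h _)] at hmu
  rw [setLIntegral_max_abs_sub_eq hm, hmu]
  exact setLIntegral_congr_fun measurableSet_Ioi fun u (hu : 0 < u) =>
    (distFun01_mu01 hm (by linarith)).symm

lemma setLIntegral_max_mu01_sub_le_toReal_distFun01
    (hm : AEMeasurable h (volume.restrict (Ioo 0 1))) (ha : 0 ≤ a) :
    ∫⁻ s in Ioo (0:ℝ) 1, ENNReal.ofReal (max (mu01 h s - a) 0) ≤
      ∫⁻ s in Ioo (0:ℝ) (distFun01 h a).toReal, ENNReal.ofReal (max (mu01 h s - a) 0) := by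
  have hzero : ∫⁻ s in Ioo (0:ℝ) 1 \ Iio (distFun01 h a).toReal,
      ENNReal.ofReal (max (mu01 h s - a) 0) = 0 := by
    refine (setLIntegral_congr_fun (measurableSet_Ioo.diff measurableSet_Iio)
      fun s hs => ?_).trans lintegral_zero
    have hle : mu01 h s ≤ a := not_lt.1 fun hlt => hs.2 ((lt_mu01_iff hm hs.1.1 ha).1 hlt)
    simp [hle]
  rw [← lintegral_inter_add_sdiff _ _ measurableSet_Iio, hzero, add_zero]
  exact lintegral_mono_set fun s hs => ⟨hs.1.1, hs.2⟩

lemma setLIntegral_max_mu01_sub_le (hf : AEMeasurable f (volume.restrict (Ioo 0 1)))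
    (hfg : Submaj01 f g) (ha : 0 ≤ a) :
    ∫⁻ s in Ioo (0:ℝ) 1, ENNReal.ofReal (max (mu01 f s - a) 0) ≤
      ∫⁻ s in Ioo (0:ℝ) 1, ENNReal.ofReal (max (mu01 g s - a) 0) := by
  have hcut := setLIntegral_max_mu01_sub_le_toReal_distFun01 hf ha
  set t₀ := (distFun01 f a).toReal
  rcases (show 0 ≤ t₀ from ENNReal.toReal_nonneg).eq_or_lt with ht₀0 | ht₀0
  · rw [← ht₀0, Ioo_self, Measure.restrict_empty, lintegral_zero_measure] at hcut
    exact hcut.trans zero_le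
  set c := ∫⁻ _ in Ioo (0:ℝ) t₀, ENNReal.ofReal a
  have hc : c ≠ ∞ := by simp [c, Real.volume_Ioo, ENNReal.mul_eq_top]
  have key : (∫⁻ s in Ioo (0:ℝ) t₀, ENNReal.ofReal (max (mu01 f s - a) 0)) + c ≤
      (∫⁻ s in Ioo (0:ℝ) t₀, ENNReal.ofReal (max (mu01 g s - a) 0)) + c := by
    calc _ = ∫⁻ s in Ioo (0:ℝ) t₀, ENNReal.ofReal (max (mu01 f s - a) 0 + a) := by
          rw [← lintegral_add_right _ measurable_const]
          refine setLIntegral_congr_fun measurableSet_Ioo fun s _ => ?_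
          rw [ENNReal.ofReal_add (le_max_right _ _) ha]
      _ = ∫⁻ s in Ioo (0:ℝ) t₀, ENNReal.ofReal (mu01 f s) :=
          setLIntegral_congr_fun measurableSet_Ioo fun s hs => by
            rw [max_eq_left (by linarith [(lt_mu01_iff hf hs.1 ha).2 hs.2]), sub_add_cancel]
      _ ≤ ∫⁻ s in Ioo (0:ℝ) t₀, ENNReal.ofReal (mu01 g s) :=
          hfg t₀ ⟨ht₀0, toReal_distFun01_le_one f a⟩
      _ ≤ ∫⁻ s in Ioo (0:ℝ) t₀, ENNReal.ofReal (max (mu01 g s - a) 0 + a) :=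
          lintegral_mono fun s =>
            ENNReal.ofReal_le_ofReal (by linarith [le_max_left (mu01 g s - a) 0])
      _ = _ := by
          rw [← lintegral_add_right _ measurable_const]
          exact lintegral_congr fun s => ENNReal.ofReal_add (le_max_right _ _) ha
  calc _ ≤ _ := hcut
    _ ≤ ∫⁻ s in Ioo (0:ℝ) t₀, ENNReal.ofReal (max (mu01 g s - a) 0) :=
        (ENNReal.add_le_add_iff_right hc).1 key
    _ ≤ _ := lintegral_mono_set (Ioo_subset_Ioo_right (toReal_distFun01_le_one f a))

lemma Submaj01.setLIntegral_max_abs_sub_le (hfg : Submaj01 f g)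
    (hf : AEMeasurable f (volume.restrict (Ioo 0 1)))
    (hg : AEMeasurable g (volume.restrict (Ioo 0 1))) (ha : 0 ≤ a) :
    ∫⁻ x in Ioo (0:ℝ) 1, ENNReal.ofReal (max (|f x| - a) 0) ≤
      ∫⁻ x in Ioo (0:ℝ) 1, ENNReal.ofReal (max (|g x| - a) 0) := by
  rw [setLIntegral_max_abs_sub_eq_mu01 hf ha, setLIntegral_max_abs_sub_eq_mu01 hg ha]
  exact setLIntegral_max_mu01_sub_le hf hfg ha

end Rearrangement

section Hinge

variable {c b : ℕ → ℝ} {x : ℝ}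

noncomputable def hingeSum (c b : ℕ → ℝ) (x : ℝ) : ℝ := ∑' n, c n * max (x - b n) 0

lemma hingeSum_nonneg (hc : ∀ n, 0 ≤ c n) (x : ℝ) : 0 ≤ hingeSum c b x :=
  tsum_nonneg fun n => mul_nonneg (hc n) (le_max_right _ _)

lemma hingeSum_eq_zero (hx : ∀ n, x ≤ b n) : hingeSum c b x = 0 := by
  simp [hingeSum, max_eq_right (sub_nonpos.2 (hx _))]

lemma summable_hinge_of_summable (hc : ∀ n, 0 ≤ c n) (hsc : Summable c) (hb : ∀ n, 0 ≤ b n)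
    (x : ℝ) : Summable fun n => c n * max (x - b n) 0 :=
  (hsc.mul_right |x|).of_nonneg_of_le (fun n => mul_nonneg (hc n) (le_max_right _ _))
    fun n => mul_le_mul_of_nonneg_left (max_le (by linarith [hb n, le_abs_self x]) (abs_nonneg x))
      (hc n)

lemma summable_hinge_of_tendsto (hb : Tendsto b atTop atTop) (x : ℝ) :
    Summable fun n => c n * max (x - b n) 0 := by
  have hfin : {n | ¬ x ≤ b n}.Finite :=
    eventually_cofinite.1 (Nat.cofinite_eq_atTop ▸ hb.eventually_ge_atTop x)
  refine summable_of_hasFiniteSupport (hfin.subset fun n hn hxb => hn ?_)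
  simp [max_eq_right (sub_nonpos.2 hxb)]

lemma hingeSum_le_tsum_mul_abs (hc : ∀ n, 0 ≤ c n) (hsc : Summable c) (hb : ∀ n, 0 ≤ b n)
    (x : ℝ) : hingeSum c b x ≤ (∑' n, c n) * |x| := by
  rw [← tsum_mul_right]
  exact (summable_hinge_of_summable hc hsc hb x).tsum_le_tsum
    (fun n => mul_le_mul_of_nonneg_left
      (max_le (by linarith [hb n, le_abs_self x]) (abs_nonneg x)) (hc n))
    (hsc.mul_right _)

lemma hingeSum_pos (hc : ∀ n, 0 ≤ c n) (hsum : Summable fun n => c n * max (x - b n) 0)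
    {k : ℕ} (hck : 0 < c k) (hbk : b k < x) : 0 < hingeSum c b x :=
  (mul_pos hck (lt_max_of_lt_left (sub_pos.2 hbk))).trans_le
    (hsum.le_tsum k fun n _ => mul_nonneg (hc n) (le_max_right _ _))

lemma convexOn_hingeSum (hc : ∀ n, 0 ≤ c n)
    (hsum : ∀ x, Summable fun n => c n * max (x - b n) 0) :
    ConvexOn ℝ univ (hingeSum c b) := by
  refine ⟨convex_univ, fun x _ y _ p q hp hq hpq => ?_⟩
  have hterm : ∀ n, c n * max (p • x + q • y - b n) 0 ≤
      p * (c n * max (x - b n) 0) + q * (c n * max (y - b n) 0) := fun n => by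
    have hmax : max (p • x + q • y - b n) 0 ≤ p * max (x - b n) 0 + q * max (y - b n) 0 := by
      refine max_le ?_ (by positivity)
      have : p • x + q • y - b n = p * (x - b n) + q * (y - b n) := by
        simp only [smul_eq_mul]; linear_combination (b n) * hpq
      rw [this]
      gcongr <;> exact le_max_left _ _
    nlinarith [hc n]
  calc hingeSum c b (p • x + q • y)
      ≤ ∑' n, (p * (c n * max (x - b n) 0) + q * (c n * max (y - b n) 0)) :=
        (hsum _).tsum_le_tsum hterm (((hsum x).mul_left p).add ((hsum y).mul_left q))
    _ = p • hingeSum c b x + q • hingeSum c b y := by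
        rw [((hsum x).mul_left p).tsum_add ((hsum y).mul_left q), tsum_mul_left, tsum_mul_left]
        rfl

lemma continuous_hingeSum (hc : ∀ n, 0 ≤ c n)
    (hsum : ∀ x, Summable fun n => c n * max (x - b n) 0) : Continuous (hingeSum c b) :=
  continuousOn_univ.1 ((convexOn_hingeSum hc hsum).continuousOn isOpen_univ)

lemma tendsto_hingeSum_div_nhdsGT_zero (hc : ∀ n, 0 ≤ c n) (hsc : Summable c)
    (hb : ∀ n, 0 < b n) : Tendsto (fun t => hingeSum c b t / t) (𝓝[>] 0) (𝓝 0) := by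
  have := tendsto_tsum_of_dominated_convergence (𝓕 := 𝓝[>] (0:ℝ))
    (f := fun t n => c n * max (t - b n) 0 / t) (g := 0) hsc (fun n => ?_) ?_
  · simpa [hingeSum, tsum_div_const] using this
  · refine tendsto_const_nhds.congr' ?_
    filter_upwards [Ioo_mem_nhdsGT (hb n)] with t ht
    rw [max_eq_right (by linarith [ht.2]), mul_zero, zero_div, Pi.zero_apply]
  · filter_upwards [self_mem_nhdsWithin] with t (ht : 0 < t) n
    rw [Real.norm_eq_abs, abs_of_nonneg (by positivity [hc n]), div_le_iff₀ ht]
    exact mul_le_mul_of_nonneg_left (max_le (by linarith [hb n]) ht.le) (hc n)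

lemma tendsto_hingeSum_div_atTop (hc : ∀ n, 0 ≤ c n)
    (hsum : ∀ x, Summable fun n => c n * max (x - b n) 0)
    (hc_sum : Tendsto (fun N => ∑ n ∈ Finset.range N, c n) atTop atTop) :
    Tendsto (fun t => hingeSum c b t / t) atTop atTop := by
  refine tendsto_atTop.2 fun C => ?_
  obtain ⟨N, hN⟩ := (hc_sum.eventually_ge_atTop (C + 1)).exists
  set B := ∑ n ∈ Finset.range N, c n * b n
  filter_upwards [eventually_ge_atTop (max 1 B)] with t ht
  have ht0 : 0 < t := by linarith [le_max_left 1 B]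
  have hlow : (∑ n ∈ Finset.range N, c n) * t - B ≤ hingeSum c b t :=
    calc _ = ∑ n ∈ Finset.range N, c n * (t - b n) := by
          simp only [B, Finset.sum_mul, ← Finset.sum_sub_distrib, mul_sub]
      _ ≤ ∑ n ∈ Finset.range N, c n * max (t - b n) 0 :=
          Finset.sum_le_sum fun n _ => mul_le_mul_of_nonneg_left (le_max_left _ _) (hc n)
      _ ≤ hingeSum c b t :=
          (hsum t).sum_le_tsum _ fun n _ => mul_nonneg (hc n) (le_max_right _ _)
  rw [le_div_iff₀ ht0]
  nlinarith [le_max_right 1 B]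

lemma lintegral_ofReal_hingeSum {α : Type*} [MeasurableSpace α] {μ : Measure α} {φ : α → ℝ}
    (hc : ∀ n, 0 ≤ c n) (hsum : ∀ x, Summable fun n => c n * max (x - b n) 0)
    (hφ : AEMeasurable φ μ) :
    ∫⁻ x, ENNReal.ofReal (hingeSum c b (φ x)) ∂μ =
      ∑' n, ENNReal.ofReal (c n) * ∫⁻ x, ENNReal.ofReal (max (φ x - b n) 0) ∂μ := by
  simp_rw [hingeSum, ENNReal.ofReal_tsum_of_nonneg
    (fun n => mul_nonneg (hc n) (le_max_right _ _)) (hsum _), ENNReal.ofReal_mul (hc _)]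
  rw [lintegral_tsum fun n => ((hφ.sub_const _).max aemeasurable_const).ennreal_ofReal.const_mul _]
  exact tsum_congr fun n => lintegral_const_mul' _ _ ENNReal.ofReal_ne_top

lemma lintegral_ofReal_hingeSum_lt_top {α : Type*} [MeasurableSpace α] {μ : Measure α}
    {φ : α → ℝ} (hc : ∀ n, 0 ≤ c n) (hsc : Summable c) (hb : ∀ n, 0 ≤ b n)
    (hφ : Integrable φ μ) : ∫⁻ x, ENNReal.ofReal (hingeSum c b (φ x)) ∂μ < ∞ :=
  (lintegral_mono fun x => ENNReal.ofReal_le_ofReal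
    (hingeSum_le_tsum_mul_abs hc hsc hb (φ x))).trans_lt (hφ.abs.const_mul _).lintegral_lt_top

lemma Submaj01.setLIntegral_hingeSum_le {f g : ℝ → ℝ} (hfg : Submaj01 f g)
    (hf : AEMeasurable f (volume.restrict (Ioo 0 1)))
    (hg : AEMeasurable g (volume.restrict (Ioo 0 1))) (hc : ∀ n, 0 ≤ c n) (hb : ∀ n, 0 ≤ b n)
    (hsum : ∀ x, Summable fun n => c n * max (x - b n) 0) :
    ∫⁻ x in Ioo (0:ℝ) 1, ENNReal.ofReal (hingeSum c b |f x|) ≤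
      ∫⁻ x in Ioo (0:ℝ) 1, ENNReal.ofReal (hingeSum c b |g x|) := by
  rw [lintegral_ofReal_hingeSum hc hsum hf.abs, lintegral_ofReal_hingeSum hc hsum hg.abs]
  exact ENNReal.tsum_le_tsum fun n =>
    mul_le_mul_right (hfg.setLIntegral_max_abs_sub_le hf hg (hb n)) _

end Hinge

section Thresholds

variable {α : Type*} [MeasurableSpace α] {μ : Measure α} {g : α → ℝ}

lemma tendsto_lintegral_max_abs_sub_natCast (hg : Integrable g μ) :
    Tendsto (fun n : ℕ => ∫⁻ x, ENNReal.ofReal (max (|g x| - n) 0) ∂μ) atTop (𝓝 0) := by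
  simpa using tendsto_lintegral_of_dominated_convergence' (f := fun _ => 0)
    (fun x => ENNReal.ofReal |g x|)
    (fun n => ((hg.aemeasurable.abs.sub_const _).max aemeasurable_const).ennreal_ofReal)
    (fun n => Eventually.of_forall fun x => ENNReal.ofReal_le_ofReal
      (max_le (by linarith [n.cast_nonneg (α := ℝ)]) (abs_nonneg _)))
    hg.abs.lintegral_lt_top.ne
    (Eventually.of_forall fun x => tendsto_const_nhds.congr'
      ((tendsto_natCast_atTop_atTop.eventually_ge_atTop |g x|).mono fun n hn => by
        simp [max_eq_right (sub_nonpos.2 hn)]))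

lemma exists_tsum_lintegral_max_abs_sub_lt_top (hg : Integrable g μ) :
    ∃ b : ℕ → ℝ, (∀ n, 1 ≤ b n) ∧ Tendsto b atTop atTop ∧
      ∑' n, ∫⁻ x, ENNReal.ofReal (max (|g x| - b n) 0) ∂μ < ∞ := by
  have hsmall : ∀ n : ℕ, ∃ m : ℕ, n + 1 ≤ m ∧
      ∫⁻ x, ENNReal.ofReal (max (|g x| - m) 0) ∂μ ≤ 2⁻¹ ^ n := fun n =>
    ((eventually_ge_atTop (n + 1)).and ((tendsto_lintegral_max_abs_sub_natCast hg).eventually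
      (ge_mem_nhds (ENNReal.pow_pos (by norm_num) n)))).exists
  choose m hm hsm using hsmall
  refine ⟨fun n => m n, fun n => show (1 : ℝ) ≤ m n by exact_mod_cast n.succ_pos.trans_le (hm n),
    tendsto_natCast_atTop_atTop.comp (tendsto_atTop_mono (fun n => (hm n).trans' n.le_succ)
      tendsto_id), ?_⟩
  calc _ ≤ ∑' n : ℕ, (2⁻¹ : ℝ≥0∞) ^ n := ENNReal.tsum_le_tsum hsm
    _ < ∞ := by simp [ENNReal.tsum_geometric]

end Thresholds

lemma isNFunction_hingeSum_add {a b : ℕ → ℝ} (ha : ∀ n, 0 < a n) (hsa : Summable a)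
    (hb : ∀ n, 1 ≤ b n) (hbtop : Tendsto b atTop atTop) :
    IsNFunction (hingeSum a a + hingeSum 1 b) := by
  have hsuma := summable_hinge_of_summable (fun n => (ha n).le) hsa (fun n => (ha n).le)
  have hsumb := summable_hinge_of_tendsto (c := 1) hbtop
  have hGa := hingeSum_nonneg (b := a) (fun n => (ha n).le)
  have hGb := hingeSum_nonneg (b := b) (c := 1) (fun _ => zero_le_one)
  have hGb0 : ∀ t ≤ 1, hingeSum 1 b t = 0 := fun t ht =>
    hingeSum_eq_zero fun n => ht.trans (hb n)
  refine ⟨((continuous_hingeSum (fun n => (ha n).le) hsuma).add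
      (continuous_hingeSum (fun _ => zero_le_one) hsumb)).continuousOn,
    (((convexOn_hingeSum (fun n => (ha n).le) hsuma).add
      (convexOn_hingeSum (fun _ => zero_le_one) hsumb)).subset (subset_univ _) (convex_Ici 0)),
    fun t _ => add_nonneg (hGa t) (hGb t), ?_, fun t ht => ?_, ?_, ?_⟩
  · simp [hingeSum_eq_zero fun n => (ha n).le, hGb0 0 zero_le_one]
  · obtain ⟨k, hk⟩ := (hsa.tendsto_atTop_zero.eventually (gt_mem_nhds ht)).exists
    exact add_pos_of_pos_of_nonneg (hingeSum_pos (fun n => (ha n).le) (hsuma t) (ha k) hk) (hGb t)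
  · refine (tendsto_hingeSum_div_nhdsGT_zero (fun n => (ha n).le) hsa ha).congr' ?_
    filter_upwards [Ioo_mem_nhdsGT zero_lt_one] with t ht
    simp [hGb0 t ht.2.le]
  · refine tendsto_atTop_mono' _ ?_ (tendsto_hingeSum_div_atTop (fun _ => zero_le_one) hsumb
      (by simpa using tendsto_natCast_atTop_atTop))
    filter_upwards [eventually_gt_atTop 0] with t ht
    exact div_le_div_of_nonneg_right (le_add_of_nonneg_left (hGa t)) ht.le

lemma lintegral_ofReal_add_comp {α : Type*} [MeasurableSpace α] {μ : Measure α} {φ : α → ℝ}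
    {G₁ G₂ : ℝ → ℝ} (hG₁ : Continuous G₁) (hG₁0 : ∀ t, 0 ≤ G₁ t) (hG₂0 : ∀ t, 0 ≤ G₂ t)
    (hφ : AEMeasurable φ μ) :
    ∫⁻ x, ENNReal.ofReal ((G₁ + G₂) (φ x)) ∂μ =
      ∫⁻ x, ENNReal.ofReal (G₁ (φ x)) ∂μ + ∫⁻ x, ENNReal.ofReal (G₂ (φ x)) ∂μ := by
  simp_rw [Pi.add_apply, ENNReal.ofReal_add (hG₁0 _) (hG₂0 _)]
  exact lintegral_add_left' (hG₁.measurable.comp_aemeasurable hφ).ennreal_ofReal _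

theorem stmt19 (g : ℝ → ℝ) (hg0 : ∀ x ∈ Ioo (0:ℝ) 1, 0 < g x)
    (hgi : IntegrableOn g (Ioo 0 1) volume) :
    ∃ G : ℝ → ℝ, IsNFunction G ∧ Tendsto (fun t => G t / t) atTop atTop ∧
      (∫⁻ s in Ioo (0:ℝ) 1, ENNReal.ofReal (G (g s))) < ⊤ ∧
      ∀ f : ℝ → ℝ, IntegrableOn f (Ioo 0 1) volume → Submaj01 f g →
        ∫⁻ s in Ioo (0:ℝ) 1, ENNReal.ofReal (G |f s|) ≤
          ∫⁻ s in Ioo (0:ℝ) 1, ENNReal.ofReal (G (g s)) := by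
  obtain ⟨b, hb, hbtop, hbg⟩ := exists_tsum_lintegral_max_abs_sub_lt_top hgi
  set a : ℕ → ℝ := fun n => (1 / 2) ^ n
  have ha : ∀ n, 0 ≤ a n := fun n => by positivity
  have hb0 : ∀ n, 0 ≤ b n := fun n => zero_le_one.trans (hb n)
  have hsuma := summable_hinge_of_summable ha summable_geometric_two ha
  have hsumb := summable_hinge_of_tendsto (c := 1) hbtop
  set G := hingeSum a a + hingeSum 1 b
  have hG : IsNFunction G :=
    isNFunction_hingeSum_add (fun n => by positivity) summable_geometric_two hb hbtop
  have hsplit : ∀ φ : ℝ → ℝ, AEMeasurable φ (volume.restrict (Ioo 0 1)) →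
      ∫⁻ s in Ioo (0:ℝ) 1, ENNReal.ofReal (G |φ s|) =
        (∫⁻ s in Ioo (0:ℝ) 1, ENNReal.ofReal (hingeSum a a |φ s|)) +
          ∫⁻ s in Ioo (0:ℝ) 1, ENNReal.ofReal (hingeSum 1 b |φ s|) := fun φ hφ =>
    lintegral_ofReal_add_comp (continuous_hingeSum ha hsuma) (hingeSum_nonneg ha)
      (hingeSum_nonneg fun _ => zero_le_one) hφ.abs
  have hg : ∫⁻ s in Ioo (0:ℝ) 1, ENNReal.ofReal (G (g s)) =
      ∫⁻ s in Ioo (0:ℝ) 1, ENNReal.ofReal (G |g s|) :=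
    setLIntegral_congr_fun measurableSet_Ioo fun s hs => by rw [abs_of_pos (hg0 s hs)]
  refine ⟨G, hG, hG.2.2.2.2.2.2, ?_, fun f hf hfg => ?_⟩
  · rw [hg, hsplit g hgi.aemeasurable,
      lintegral_ofReal_hingeSum (c := 1) (fun _ => zero_le_one) hsumb hgi.aemeasurable.abs]
    exact ENNReal.add_lt_top.2
      ⟨lintegral_ofReal_hingeSum_lt_top ha summable_geometric_two ha hgi.abs, by simpa using hbg⟩
  · rw [hg, hsplit f hf.aemeasurable, hsplit g hgi.aemeasurable]
    exact add_le_add (hfg.setLIntegral_hingeSum_le hf.aemeasurable hgi.aemeasurable ha ha hsuma)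
      (hfg.setLIntegral_hingeSum_le hf.aemeasurable hgi.aemeasurable (fun _ => zero_le_one) hb0
        hsumb)
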